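/- arXiv:2207.04931 — 3 statements merged into one kernel-verified Lean document; each statement's English description precedes it below -/
import Mathlib

section
/- Let T be a tree proof for m bins of value v(T). Then for every online bin stretching algorithm A, v(T) ≤ sup_{I a bin-stretching instance} R(I,A). In particular v(T) is a lower bound on the optimal stretching factor s* = inf_A sup_I R(I,A). -/
/-- A bin-stretching instance for `m` bins: a finite sequence of strictly positive reals
that can be partitioned into `m` parts, each of total size at most `1`. -/
def IsBSInstance (m : ℕ) (I : List ℝ) : Prop :=
  (∀ x ∈ I, 0 < x) ∧
  ∃ P : Fin I.length → Fin m,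
    ∀ i : Fin m, ∑ j ∈ Finset.univ.filter (fun j => P j = i), I.get j ≤ 1

/-- `y` is an extension of the instance `I` if appending `y` to `I` again yields a
bin-stretching instance. -/
def IsBSExtension (m : ℕ) (I : List ℝ) (y : ℝ) : Prop :=
  0 < y ∧ IsBSInstance m (I ++ [y])

/-- Run an online algorithm `A` (which, given the previously received items, the new item and
the current partition — as an assignment of item indices to bins — returns the bin for the
new item) on the list of items `I`.  Returns the list of bin choices, one for each item. -/
def runBS (A : List ℝ → ℝ → (ℕ → ℕ) → ℕ) (I : List ℝ) : List ℕ :=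
  (I.foldl
    (fun (acc : List ℝ × List ℕ) (x : ℝ) =>
      (acc.1 ++ [x], acc.2 ++ [A acc.1 x (fun j => acc.2.getD j 0)]))
    (([] : List ℝ), ([] : List ℕ))).2

/-- The load of bin `i` when the items of `I` are assigned to bins according to `P`. -/
def binLoad (I : List ℝ) (P : ℕ → ℕ) (i : ℕ) : ℝ :=
  ∑ j ∈ Finset.range I.length, if P j = i then I.getD j 0 else 0

/-- The result `R(I, A)` of the algorithm `A` on the instance `I` : the load of the fullest
of the `m` bins after `A` has placed all items of `I`. -/
noncomputable def resultBS (m : ℕ) (A : List ℝ → ℝ → (ℕ → ℕ) → ℕ) (I : List ℝ) : ℝ :=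
  ⨆ i : Fin m, binLoad I (fun j => (runBS A I).getD j 0) (i : ℕ)

/-- The underlying (finite) shape of a tree proof for `m` bins: a leaf carries an instance
and a partition (an assignment of item indices to bins); an internal node additionally
carries the next item `y` and has one child for each of the `m` bins. -/
inductive BSTree (m : ℕ) : Type where
  | leaf (I : List ℝ) (P : ℕ → ℕ) : BSTree m
  | node (I : List ℝ) (P : ℕ → ℕ) (y : ℝ) (child : Fin m → BSTree m) : BSTree m

/-- The instance carried by the root of a tree. -/
def BSTree.inst {m : ℕ} : BSTree m → List ℝ
  | .leaf I _ => I
  | .node I _ _ _ => I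

/-- The partition carried by the root of a tree. -/
def BSTree.part {m : ℕ} : BSTree m → (ℕ → ℕ)
  | .leaf _ P => P
  | .node _ P _ _ => P

/-- Validity of a tree proof: each node carries a bin-stretching instance together with a
partition of its items into the `m` bins, each internal node carries an extension `y` of its
instance, and for each bin `i` the `i`-th child of an internal node `(I, P, y)` carries the
instance `I ⊕ y` and the partition obtained from `P` by placing the new item in bin `i`. -/
def BSTree.Valid {m : ℕ} : BSTree m → Prop
  | .leaf I P => IsBSInstance m I ∧ (∀ j < I.length, P j < m)
  | .node I P y child =>
      IsBSInstance m I ∧ (∀ j < I.length, P j < m) ∧ IsBSExtension m I y ∧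
      ∀ i : Fin m,
        (child i).inst = I ++ [y] ∧
        (∀ j < I.length, (child i).part j = P j) ∧
        (child i).part I.length = (i : ℕ) ∧
        (child i).Valid

/-- The value of a tree proof: the value of a leaf `(I, P)` is the load of its fullest bin,
and the value of the tree is the minimum of the values of its leaves. -/
noncomputable def BSTree.value {m : ℕ} : BSTree m → ℝ
  | .leaf I P => ⨆ i : Fin m, binLoad I P (i : ℕ)
  | .node _ _ _ child => ⨅ i : Fin m, (child i).value


lemma runBS_fst (A : List ℝ → ℝ → (ℕ → ℕ) → ℕ) :
    ∀ (L a : List ℝ) (b : List ℕ),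
    (L.foldl (fun (acc : List ℝ × List ℕ) (x : ℝ) =>
      (acc.1 ++ [x], acc.2 ++ [A acc.1 x (fun j => acc.2.getD j 0)])) (a, b)).1 = a ++ L := by
  intro L
  induction L with
  | nil => simp
  | cons x L ih => intro a b; rw [List.foldl_cons, ih]; simp

lemma runBS_append (A : List ℝ → ℝ → (ℕ → ℕ) → ℕ) (I : List ℝ) (y : ℝ) :
    runBS A (I ++ [y]) = runBS A I ++ [A I y (fun j => (runBS A I).getD j 0)] := by
  unfold runBS
  rw [List.foldl_append]
  have h := runBS_fst A I [] []
  simp only [List.nil_append] at h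
  simp only [List.foldl_cons, List.foldl_nil, h]

lemma runBS_length (A : List ℝ → ℝ → (ℕ → ℕ) → ℕ) (I : List ℝ) :
    (runBS A I).length = I.length := by
  induction I using List.reverseRecOn with
  | nil => rfl
  | append_singleton l a ih => rw [runBS_append]; simp [ih]

lemma binLoad_congr {I : List ℝ} {Q Q' : ℕ → ℕ} {i : ℕ}
    (h : ∀ j < I.length, Q j = Q' j) : binLoad I Q i = binLoad I Q' i := by
  unfold binLoad
  exact Finset.sum_congr rfl fun j hj => by rw [h j (Finset.mem_range.mp hj)]

lemma binLoad_le_card {m : ℕ} {I : List ℝ} (hI : IsBSInstance m I) (Q : ℕ → ℕ) (i : ℕ) :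
    binLoad I Q i ≤ (m : ℝ) := by
  obtain ⟨hpos, P, hP⟩ := hI
  have h1 : binLoad I Q i ≤ ∑ j ∈ Finset.range I.length, I.getD j 0 := by
    unfold binLoad
    refine Finset.sum_le_sum fun j hj => ?_
    have hj' := Finset.mem_range.mp hj
    have : 0 ≤ I.getD j 0 := by
      rw [List.getD_eq_getElem I 0 hj']
      exact le_of_lt (hpos _ (List.getElem_mem hj'))
    split
    · exact le_rfl
    · exact this
  have h2 : ∑ j ∈ Finset.range I.length, I.getD j 0 = ∑ j : Fin I.length, I.get j := by
    rw [← Fin.sum_univ_eq_sum_range (fun j => I.getD j 0) I.length]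
    exact Finset.sum_congr rfl fun j _ => by
      rw [List.getD_eq_getElem I 0 j.isLt]; rfl
  have h3 : ∑ j : Fin I.length, I.get j ≤ (m : ℝ) := by
    have := Finset.sum_fiberwise (Finset.univ : Finset (Fin I.length)) P I.get
    calc ∑ j : Fin I.length, I.get j
        = ∑ i : Fin m, ∑ j ∈ Finset.univ.filter (fun j => P j = i), I.get j := this.symm
      _ ≤ ∑ _i : Fin m, (1 : ℝ) := Finset.sum_le_sum fun i _ => hP i
      _ = (m : ℝ) := by simp
  linarith

lemma resultBS_le_card {m : ℕ} (hm : 1 ≤ m) {I : List ℝ} (hI : IsBSInstance m I)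
    (A : List ℝ → ℝ → (ℕ → ℕ) → ℕ) : resultBS m A I ≤ (m : ℝ) := by
  haveI : Nonempty (Fin m) := Fin.pos_iff_nonempty.mp hm
  exact ciSup_le fun i => binLoad_le_card hI _ _

lemma bs_key (m : ℕ) (A : List ℝ → ℝ → (ℕ → ℕ) → ℕ) (hA : ∀ I y P, A I y P < m)
    (T : BSTree m) (hv : T.Valid)
    (hmatch : ∀ j < T.inst.length, (runBS A T.inst).getD j 0 = T.part j) :
    ∃ J : List ℝ, IsBSInstance m J ∧ T.value ≤ resultBS m A J := by
  induction T with
  | leaf I P =>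
    refine ⟨I, hv.1, le_of_eq ?_⟩
    simp only [BSTree.value, resultBS]
    exact iSup_congr fun i =>
      binLoad_congr fun j hj => (hmatch j hj).symm
  | node I P y child ih =>
    simp only [BSTree.inst, BSTree.part] at hmatch
    obtain ⟨hI, hPlt, hext, hch⟩ := hv
    set i0 := A I y (fun j => (runBS A I).getD j 0) with hi0def
    have hi0 : i0 < m := hA _ _ _
    set i' : Fin m := ⟨i0, hi0⟩ with hi'def
    obtain ⟨hinst, hpr, hnew, hval⟩ := hch i'
    have hrun : runBS A (I ++ [y]) = runBS A I ++ [i0] := runBS_append A I y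
    have hlen : (runBS A I).length = I.length := runBS_length A I
    have hmatch' : ∀ j < (child i').inst.length,
        (runBS A (child i').inst).getD j 0 = (child i').part j := by
      intro j hj
      rw [hinst] at hj ⊢
      rw [hrun]
      rw [List.length_append, List.length_singleton] at hj
      rcases Nat.lt_succ_iff_lt_or_eq.mp hj with h | h
      · rw [List.getD_append _ _ _ _ (by omega), hmatch j (by simpa using h), hpr j h]
      · subst h
        rw [List.getD_append_right _ _ _ _ (by omega), hnew]
        simp [hlen, hi'def]
    obtain ⟨J, hJ, hle⟩ := ih i' hval hmatch'
    refine ⟨J, hJ, le_trans ?_ hle⟩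
    exact ciInf_le (Finite.bddBelow_range _) i'

lemma bs_sup_bound (m : ℕ) (hm : 1 ≤ m)
    (P₀ : ℕ → ℕ) (y₀ : ℝ) (child : Fin m → BSTree m)
    (hT : (BSTree.node [] P₀ y₀ child).Valid)
    (A : List ℝ → ℝ → (ℕ → ℕ) → ℕ) (hA : ∀ I y P, A I y P < m) :
    (BSTree.node [] P₀ y₀ child).value ≤
      sSup {r : ℝ | ∃ I : List ℝ, IsBSInstance m I ∧ resultBS m A I = r} := by
  obtain ⟨J, hJ, hle⟩ := bs_key m A hA (BSTree.node [] P₀ y₀ child) hT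
    (by intro j hj; simp [BSTree.inst] at hj)
  refine le_trans hle (le_csSup ⟨(m : ℝ), ?_⟩ ⟨J, hJ, rfl⟩)
  rintro r ⟨K, hK, rfl⟩
  exact resultBS_le_card hm hK A

/-- Let `T` be a valid tree proof for `m` bins whose root is of the form `(∅, (∅, …, ∅), y)`.
Then for every online bin stretching algorithm `A`, the value of `T` is at most
`sup_I R(I, A)`; in particular, the value of `T` is a lower bound on the optimal stretching
factor `s* = inf_A sup_I R(I, A)`. -/
theorem tree_proof_lower_bound (m : ℕ) (hm : 1 ≤ m)
    (P₀ : ℕ → ℕ) (y₀ : ℝ) (child : Fin m → BSTree m)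
    (hT : (BSTree.node [] P₀ y₀ child).Valid)
    (A : List ℝ → ℝ → (ℕ → ℕ) → ℕ) (hA : ∀ I y P, A I y P < m) :
    (BSTree.node [] P₀ y₀ child).value ≤
      sSup {r : ℝ | ∃ I : List ℝ, IsBSInstance m I ∧ resultBS m A I = r} ∧
    (BSTree.node [] P₀ y₀ child).value ≤
      sInf {s : ℝ | ∃ B : List ℝ → ℝ → (ℕ → ℕ) → ℕ, (∀ I y P, B I y P < m) ∧
        s = sSup {r : ℝ | ∃ I : List ℝ, IsBSInstance m I ∧ resultBS m B I = r}} := by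
  constructor
  · exact bs_sup_bound m hm P₀ y₀ child hT A hA
  · refine le_csInf ⟨_, fun _ _ _ => 0, fun _ _ _ => hm, rfl⟩ ?_
    rintro s ⟨B, hB, rfl⟩
    exact bs_sup_bound m hm P₀ y₀ child hT B hB
end

section
/- Let b = (b_1,…,b_m) be a packing with b_1 < t and (m−1)·b_{m−1} > m·g − t (i.e., b_{m−1} > (mg−t)/(m−1), with m ≥ 2). Then b is algorithm-winning, i.e., b ∈ P_alg: for every instance I such that (I,b) is a configuration, AdvWins(I,b) fails. -/
/-- Add an item of size `y` to bin `i` of the packing `b`, then re-sort the bin loads in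
non-increasing order (so that the result is again a packing). -/
def addSort {m : ℕ} (b : Fin m → ℕ) (y : ℕ) (i : Fin m) : Fin m → ℕ :=
  (Function.update b i (b i + y)) ∘
    (Tuple.sort (OrderDual.toDual ∘ Function.update b i (b i + y)))

/-- An instance (for `m` bins of integer capacity `g`): a finite multiset of item sizes in
`{1, …, g}` that can be partitioned into `m` parts, each of total size at most `g`. -/
def IsInstanceZ (m g : ℕ) (I : Multiset ℕ) : Prop :=
  (∀ x ∈ I, 0 < x ∧ x ≤ g) ∧
  ∃ f : Fin m → Multiset ℕ, (∑ i, f i) = I ∧ ∀ i, (f i).sum ≤ g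

/-- An item size `y ∈ {1, …, g}` is an extension of the instance `I` if `I ∪ {y}` is again
an instance. -/
def IsExtensionZ (m g : ℕ) (I : Multiset ℕ) (y : ℕ) : Prop :=
  0 < y ∧ y ≤ g ∧ IsInstanceZ m g (y ::ₘ I)

/-- A configuration: an instance `I` together with a packing `b` (bin loads sorted in
non-increasing order) such that some partition of `I` into `m` parts has part sums exactly
`b 0, …, b (m-1)`. -/
def IsConfigZ (m g : ℕ) (I : Multiset ℕ) (b : Fin m → ℕ) : Prop :=
  IsInstanceZ m g I ∧ Antitone b ∧
  ∃ f : Fin m → Multiset ℕ, (∑ i, f i) = I ∧ ∀ i, (f i).sum = b i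

/-- The adversary wins the configuration `(I, b)`: either some bin load already reaches the
target `t`, or the adversary can send an extension `y` of `I` such that whatever bin the
algorithm places `y` in, the adversary wins the resulting configuration. -/
inductive AdvWins (m g t : ℕ) : Multiset ℕ → (Fin m → ℕ) → Prop where
  | reached (I : Multiset ℕ) (b : Fin m → ℕ) (i : Fin m) (h : t ≤ b i) : AdvWins m g t I b
  | send (I : Multiset ℕ) (b : Fin m → ℕ) (y : ℕ) (hy : IsExtensionZ m g I y)
      (h : ∀ i : Fin m, AdvWins m g t (y ::ₘ I) (addSort b y i)) : AdvWins m g t I b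

/-- A packing `b` is algorithm-winning (`b ∈ P_alg`) if for every instance `I` such that
`(I, b)` is a configuration, the adversary does not win `(I, b)`. -/
def AlgWinning (m g t : ℕ) (b : Fin m → ℕ) : Prop :=
  ∀ I : Multiset ℕ, IsConfigZ m g I b → ¬ AdvWins m g t I b

private lemma instSum {m g : ℕ} {I : Multiset ℕ} (h : IsInstanceZ m g I) :
    I.sum ≤ m * g := by
  obtain ⟨-, f, hf, hle⟩ := h
  have h1 : I.sum = ∑ i, (f i).sum := by
    rw [← hf]
    exact map_sum Multiset.sumAddMonoidHom f Finset.univ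
  rw [h1]
  calc ∑ i, (f i).sum ≤ ∑ _i : Fin m, g := Finset.sum_le_sum fun i _ => hle i
    _ = m * g := by simp [Finset.sum_const, mul_comm]

set_option maxHeartbeats 2000000 in
private lemma key (m g t : ℕ) (hm : 2 ≤ m) :
    ∀ I : Multiset ℕ, ∀ b : Fin m → ℕ, AdvWins m g t I b → IsConfigZ m g I b →
      b ⟨0, by omega⟩ < t → m * g < (m - 1) * b ⟨m - 2, by omega⟩ + t → False := by
  intro I b hw
  induction hw with
  | reached I b i hti =>
    intro hcfg h1 h2
    have hb := hcfg.2.1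
    have : b i ≤ b ⟨0, by omega⟩ := hb (Fin.mk_le_mk.mpr (Nat.zero_le _)) |>.trans_eq rfl
    omega
  | send I b y hy h ih =>
    intro hcfg h1 h2
    obtain ⟨hinst, hb, f, hfI, hfb⟩ := hcfg
    set i₀ : Fin m := ⟨m - 1, by omega⟩ with hi₀
    set i₁ : Fin m := ⟨m - 2, by omega⟩ with hi₁
    have hne : i₁ ≠ i₀ := by
      simp only [hi₀, hi₁, ne_eq, Fin.mk.injEq]; omega
    -- total sums
    have hIsum : I.sum = ∑ i, b i := by
      calc I.sum = ∑ i, (f i).sum := by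
            rw [← hfI]; exact map_sum Multiset.sumAddMonoidHom f Finset.univ
        _ = ∑ i, b i := Finset.sum_congr rfl fun i _ => hfb i
    have hys : y + I.sum ≤ m * g := by
      have := instSum hy.2.2
      rwa [Multiset.sum_cons] at this
    -- lower bound on the sum of bins
    have hlow : (m - 1) * b i₁ + b i₀ ≤ ∑ i, b i := by
      have h1' : ∑ i ∈ Finset.univ.erase i₀, b i + b i₀ = ∑ i, b i :=
        Finset.sum_erase_add _ _ (Finset.mem_univ i₀)
      have h2' : (m - 1) * b i₁ ≤ ∑ i ∈ Finset.univ.erase i₀, b i := by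
        have hcard : (Finset.univ.erase i₀).card = m - 1 := by
          rw [Finset.card_erase_of_mem (Finset.mem_univ i₀)]
          simp
        have := Finset.card_nsmul_le_sum (Finset.univ.erase i₀) b (b i₁) ?_
        · rwa [hcard, smul_eq_mul] at this
        · intro i hi
          have hi' : i ≠ i₀ := (Finset.mem_erase.mp hi).1
          apply hb
          have : (i : ℕ) ≠ m - 1 := fun hc => hi' (Fin.ext hc)
          exact Fin.mk_le_mk.mpr (by omega)
      omega
    have hyb : b i₀ + y < t := by omega
    -- the new packing
    set c : Fin m → ℕ := Function.update b i₀ (b i₀ + y) with hc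
    set σ := Tuple.sort (OrderDual.toDual ∘ c) with hσ
    have hanti : Antitone (c ∘ σ) := by
      intro a b' hab
      exact Tuple.monotone_sort (OrderDual.toDual ∘ c) hab
    have hcval : ∀ j, c j = if j = i₀ then b i₀ + y else b j := by
      intro j; rw [hc, Function.update_apply]
    have hct : ∀ j, c j < t := by
      intro j
      rw [hcval]
      split
      · exact hyb
      · exact lt_of_le_of_lt (hb (Fin.mk_le_mk.mpr (Nat.zero_le _))) h1
    have hclb : ∀ j, j ≠ i₀ → b i₁ ≤ c j := by
      intro j hj
      rw [hcval, if_neg hj]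
      apply hb
      have : (j : ℕ) ≠ m - 1 := fun hc' => hj (Fin.ext hc')
      exact Fin.mk_le_mk.mpr (by omega)
    -- the invariant for the new packing
    have hkey : b i₁ ≤ (c ∘ σ) i₁ := by
      by_contra hcon
      push_neg at hcon
      have hA : σ i₁ = i₀ := by
        by_contra hA
        exact absurd (hclb (σ i₁) hA) (not_le.mpr hcon)
      have hcon0 : (c ∘ σ) i₀ < b i₁ :=
        lt_of_le_of_lt (hanti (Fin.mk_le_mk.mpr (by omega))) hcon
      have hB : σ i₀ = i₀ := by
        by_contra hB
        exact absurd (hclb (σ i₀) hB) (not_le.mpr hcon0)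
      exact hne (σ.injective (hA.trans hB.symm))
    -- the new configuration
    have hcfg' : IsConfigZ m g (y ::ₘ I) (c ∘ σ) := by
      refine ⟨hy.2.2, hanti, fun k => Function.update f i₀ (y ::ₘ f i₀) (σ k), ?_, ?_⟩
      · rw [Equiv.sum_comp σ (Function.update f i₀ (y ::ₘ f i₀))]
        rw [Finset.sum_update_of_mem (Finset.mem_univ i₀)]
        rw [Multiset.cons_add, ← hfI,
          ← Finset.add_sum_erase _ f (Finset.mem_univ i₀), Finset.erase_eq]
      · intro k
        simp only [Function.comp_apply]
        rw [Function.update_apply, hcval]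
        split
        · rw [Multiset.sum_cons, hfb]; omega
        · exact hfb _
    have hadd : addSort b y i₀ = c ∘ σ := rfl
    refine ih i₀ ?_ ?_ ?_
    · rwa [hadd]
    · rw [hadd]; exact hct _
    · rw [hadd]
      have : (c ∘ σ) ⟨m - 2, by omega⟩ = (c ∘ σ) i₁ := rfl
      rw [this]
      have := Nat.mul_le_mul_left (m - 1) hkey
      omega

/-- Property 2 of the paper: a packing `b` with `b₁ < t` (largest load below the target) and
`(m−1)·b_{m−1} > m·g − t` is algorithm-winning. -/
theorem packing_algWinning (m g t : ℕ) (hm : 2 ≤ m) (hg : 1 ≤ g) (hgt : g < t)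
    (b : Fin m → ℕ) (hb : Antitone b)
    (h1 : b ⟨0, by omega⟩ < t)
    (h2 : m * g < (m - 1) * b ⟨m - 2, by omega⟩ + t) :
    AlgWinning m g t b := by
  intro I hcfg hw
  exact key m g t hm I b hw hcfg h1 h2
end

section
/- Fix integers S ≥ 0, g ≥ 1 and m ≥ 1 with S ≤ m·g. The function f : P_{S,g,m} → {0, 1, …, N_{S,g,m} − 1}, defined by f(b) = 0 if S = 0 and otherwise f(b) = Σ_{i=0}^{r−1} N_{S_i, b_{i+1}−1, m−i}, where r is the largest index with b_r ≠ 0 and S_i = S − Σ_{j=1}^{i} b_j, is a bijection. -/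
/-- `P_{S,k,n}`: the set of non-increasing `n`-tuples of natural numbers with all
coordinates at most `k` and coordinate sum exactly `S`. -/
def PSkn (S k n : ℕ) : Set (Fin n → ℕ) :=
  {b | Antitone b ∧ (∀ i, b i ≤ k) ∧ (∑ i, b i) = S}

/-- `N_{S,k,n}`: the cardinality of `P_{S,k,n}`. -/
noncomputable def NSkn (S k n : ℕ) : ℕ :=
  Nat.card (PSkn S k n)

/-- The index `f(b)` of a tuple `b ∈ P_{S,g,m}`: writing `r` for the number of nonzero
coordinates of `b` (the largest index with `b_r ≠ 0`, since `b` is non-increasing) and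
`S_i = S − Σ_{j=1}^{i} b_j`, we set `f(b) = Σ_{i=0}^{r−1} N_{S_i, b_{i+1}−1, m−i}`
(for `S = 0` this is the empty sum, so `f` of the zero tuple is `0`). -/
noncomputable def fIdx (S : ℕ) {m : ℕ} (b : Fin m → ℕ) : ℕ :=
  ∑ i : Fin m,
    if (i : ℕ) < (Finset.univ.filter (fun j : Fin m => b j ≠ 0)).card then
      NSkn (S - ∑ j ∈ Finset.univ.filter (fun j : Fin m => j < i), b j)
        (b i - 1) (m - (i : ℕ))
    else 0

/-!
`f(b)` is the lexicographic rank of `b` in `P_{S,g,m}`, i.e. the number of tuples of `P_{S,g,m}`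
lexicographically smaller than `b`. Indeed, the tuples `c` with `c₁ < b₁` form `P_{S,b₁-1,m}`, and
those with `c₁ = b₁` correspond, by dropping the first coordinate, to the tuples of
`P_{S-b₁,b₁,m-1}` lexicographically smaller than the tail of `b`; the sum defining `f` unrolls this
recursion. The rank function of any finite linearly ordered set `s` is a bijection onto
`{0, …, |s| - 1}`.
-/

open Set Finset

theorem Fin.antitone_cons {α : Type*} [Preorder α] {n : ℕ} {a : α} {f : Fin n → α} :
    Antitone (Fin.cons a f : Fin (n + 1) → α) ↔ (∀ i, f i ≤ a) ∧ Antitone f := by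
  simpa only [antitone_iff_forall_lt, Relator.LiftFun, ge_iff_le] using
    Fin.liftFun_cons (α := α) (· ≥ ·) (a := a) (f := f)

theorem Fin.toLex_cons_lt_toLex_cons {α : Type*} [LT α] {n : ℕ} {a b : α} {f g : Fin n → α} :
    toLex (Fin.cons a f : Fin (n + 1) → α) < toLex (Fin.cons b g) ↔
      a < b ∨ a = b ∧ toLex f < toLex g :=
  Fin.pi_lex_lt_cons_cons _

theorem Set.Finite.bijOn_ncard_setOf_lt {α : Type*} [LinearOrder α] {s : Set α} (hs : s.Finite) :
    BijOn (fun x => {y ∈ s | y < x}.ncard) s (Iio s.ncard) := by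
  have hmono : StrictMonoOn (fun x => {y ∈ s | y < x}.ncard) s := fun x hx x' _ h =>
    ncard_lt_ncard ⟨fun y hy => ⟨hy.1, hy.2.trans h⟩, fun hsub => (hsub ⟨hx, h⟩).2.false⟩
      (hs.subset (sep_subset _ _))
  have hmaps : MapsTo (fun x => {y ∈ s | y < x}.ncard) s (Iio s.ncard) := fun x hx =>
    ncard_lt_ncard ⟨sep_subset _ _, fun hsub => (hsub hx).2.false⟩ hs
  have himage : (fun x => {y ∈ s | y < x}.ncard) '' s = Iio s.ncard :=
    eq_of_subset_of_ncard_le hmaps.image_subset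
      (by rw [ncard_Iio_nat, hmono.injOn.ncard_image])
  exact himage ▸ hmono.injOn.bijOn_image

theorem finite_PSkn (S k n : ℕ) : (PSkn S k n).Finite :=
  (Set.Finite.pi' fun _ => Set.finite_Iic k).subset fun _ hb => hb.2.1

theorem cons_mem_PSkn_iff {S k n t : ℕ} {b : Fin n → ℕ} :
    (Fin.cons t b : Fin (n + 1) → ℕ) ∈ PSkn S k (n + 1) ↔
      t ≤ k ∧ t ≤ S ∧ b ∈ PSkn (S - t) t n := by
  simp only [PSkn, mem_ofPred_eq, Fin.antitone_cons, Fin.forall_fin_succ, Fin.cons_zero,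
    Fin.cons_succ, Fin.sum_cons]
  constructor
  · rintro ⟨⟨hbt, hb⟩, ⟨htk, -⟩, hsum⟩
    exact ⟨htk, by omega, hb, hbt, by omega⟩
  · rintro ⟨htk, htS, hb, hbt, hsum⟩
    exact ⟨⟨hbt, hb⟩, ⟨htk, fun i => (hbt i).trans htk⟩, by omega⟩

theorem fIdx_zero (S m : ℕ) : fIdx S (0 : Fin m → ℕ) = 0 := by
  simp [fIdx]

theorem fIdx_cons {S n t : ℕ} (ht : t ≠ 0) (b : Fin n → ℕ) :
    fIdx S (Fin.cons t b : Fin (n + 1) → ℕ) = NSkn S (t - 1) (n + 1) + fIdx (S - t) b := by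
  have hcard : #{j | (Fin.cons t b : Fin (n + 1) → ℕ) j ≠ 0} = #{j | b j ≠ 0} + 1 := by
    simp [Finset.card_filter, Fin.sum_univ_succ, ht, add_comm]
  have hsum (i : Fin n) : ∑ j with j < i.succ, (Fin.cons t b : Fin (n + 1) → ℕ) j =
      t + ∑ j with j < i, b j := by
    simp [Finset.sum_filter, Fin.sum_univ_succ, Fin.succ_pos]
  simp [fIdx, Fin.sum_univ_succ, hcard, hsum, Nat.sub_sub]

theorem setOf_toLex_lt_cons_eq {S k n t : ℕ} {b : Fin n → ℕ} (ht : t ≠ 0) (htk : t ≤ k)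
    (htS : t ≤ S) :
    {c ∈ PSkn S k (n + 1) | toLex c < toLex (Fin.cons t b : Fin (n + 1) → ℕ)} =
      PSkn S (t - 1) (n + 1) ∪ Fin.cons t '' {d ∈ PSkn (S - t) t n | toLex d < toLex b} := by
  ext c
  obtain ⟨s, d, rfl⟩ := Fin.exists_cons c
  simp only [mem_sep_iff, mem_union, mem_image, cons_mem_PSkn_iff, Fin.toLex_cons_lt_toLex_cons,
    Fin.cons_inj]
  constructor
  · rintro ⟨⟨hsk, hsS, hd⟩, hs | ⟨rfl, hdb⟩⟩
    · exact Or.inl ⟨by omega, hsS, hd⟩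
    · exact Or.inr ⟨d, ⟨hd, hdb⟩, rfl, rfl⟩
  · rintro (⟨hst, hsS, hd⟩ | ⟨d, ⟨hd, hdb⟩, rfl, rfl⟩)
    · exact ⟨⟨by omega, hsS, hd⟩, Or.inl (by omega)⟩
    · exact ⟨⟨htk, htS, hd⟩, Or.inr ⟨rfl, hdb⟩⟩

theorem ncard_setOf_toLex_lt_cons {S k n t : ℕ} {b : Fin n → ℕ} (ht : t ≠ 0) (htk : t ≤ k)
    (htS : t ≤ S) :
    {c ∈ PSkn S k (n + 1) | toLex c < toLex (Fin.cons t b : Fin (n + 1) → ℕ)}.ncard =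
      NSkn S (t - 1) (n + 1) + {d ∈ PSkn (S - t) t n | toLex d < toLex b}.ncard := by
  have hdisj : Disjoint (PSkn S (t - 1) (n + 1))
      (Fin.cons t '' {d ∈ PSkn (S - t) t n | toLex d < toLex b}) := by
    rw [Set.disjoint_left]
    rintro _ hc ⟨d, -, rfl⟩
    have hhead : t ≤ t - 1 := by simpa using hc.2.1 0
    omega
  rw [setOf_toLex_lt_cons_eq ht htk htS, ncard_union_eq hdisj (finite_PSkn _ _ _)
    ((finite_PSkn _ _ _).subset (sep_subset _ _) |>.image _),
    ncard_image_of_injective _ (Fin.cons_right_injective (α := fun _ => ℕ) t), NSkn,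
    Nat.card_coe_set_eq]

theorem ncard_setOf_toLex_lt_zero {n : ℕ} (s : Set (Fin n → ℕ)) :
    {c ∈ s | toLex c < toLex 0}.ncard = 0 := by
  rw [(eq_empty_of_forall_notMem fun c hc => not_lt_bot (a := toLex c) hc.2 :
    {c ∈ s | toLex c < toLex 0} = ∅), ncard_empty]

theorem fIdx_eq_ncard_setOf_toLex_lt {S k n : ℕ} {b : Fin n → ℕ} (hb : b ∈ PSkn S k n) :
    fIdx S b = {c ∈ PSkn S k n | toLex c < toLex b}.ncard := by
  induction n generalizing S k with
  | zero => rw [Subsingleton.elim b 0, fIdx_zero, ncard_setOf_toLex_lt_zero]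
  | succ n ih =>
    obtain ⟨t, d, rfl⟩ := Fin.exists_cons b
    obtain ⟨htk, htS, hd⟩ := cons_mem_PSkn_iff.mp hb
    rcases eq_or_ne t 0 with rfl | ht
    · have hzero : (Fin.cons 0 d : Fin (n + 1) → ℕ) = 0 :=
        funext fun i => Nat.eq_zero_of_le_zero (hb.1 (Fin.zero_le i))
      rw [hzero, fIdx_zero, ncard_setOf_toLex_lt_zero]
    · rw [fIdx_cons ht, ncard_setOf_toLex_lt_cons ht htk htS, ih hd]

-- `Lex (Fin m → ℕ)` is a type synonym, so `PSkn S g m` is ranked in the lexicographic order as is.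
theorem fIdx_bijective_general (S g m : ℕ) :
    Set.BijOn (fIdx S (m := m)) (PSkn S g m) (Set.Iio (NSkn S g m)) :=
  ((finite_PSkn S g m).bijOn_ncard_setOf_lt (α := Lex (Fin m → ℕ))).congr
    fun _ hb => (fIdx_eq_ncard_setOf_toLex_lt hb).symm

/-- Property 8 of the paper: `f` is a bijection from `P_{S,g,m}` onto
`{0, 1, …, N_{S,g,m} − 1}`. -/
theorem fIdx_bijective (S g m : ℕ) (hg : 1 ≤ g) (hm : 1 ≤ m) (hS : S ≤ m * g) :
    Set.BijOn (fIdx S (m := m)) (PSkn S g m) (Set.Iio (NSkn S g m)) :=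
  fIdx_bijective_general S g m
end
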